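/- arXiv:math/0608521 — 4 statements merged into one kernel-verified Lean document; each statement's English description precedes it below -/
import Mathlib

section
/- For every nonnegative integer n, the sum over j from 0 to n of binom(n, j)^2 / binom(2n, 2j) equals (2^n * n!)^2 / (2n)!, where the sum is taken in the rationals. -/
/-!
Since `C(n,j)² · C(2n,n) = C(2n,2j) · C(2j,j) · C(2n-2j,n-j)`, the sum equals
`C(2n,n)⁻¹ · ∑ⱼ C(2j,j) C(2n-2j,n-j)`, and this convolution of central binomial coefficients
is `4ⁿ`. The latter is Chu–Vandermonde for `C(-1/2 + -1/2, n) = C(-1, n) = (-1)ⁿ`, because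
`C(-1/2, k) = (-1/4)ᵏ C(2k,k)`.
-/

open Finset

theorem Ring.succ_nsmul_choose_succ {R : Type*} [Ring R] [BinomialRing R] (r : R) (k : ℕ) :
    (k + 1) • Ring.choose r (k + 1) = Ring.choose r k * (r - k) := by
  simpa [Ring.choose_one_right] using Ring.choose_smul_choose r (Nat.le_succ k)

theorem Ring.choose_neg_one {R : Type*} [Ring R] [BinomialRing R] (n : ℕ) :
    Ring.choose (-1 : R) n = (-1) ^ n := by
  rw [Ring.choose_neg, add_sub_cancel_left, Ring.choose_natCast, Nat.choose_self, Nat.cast_one]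
  simp [Units.smul_def]

theorem Ring.choose_neg_half (k : ℕ) :
    Ring.choose (-(1 / 2) : ℚ) k = (-(1 / 4)) ^ k * k.centralBinom := by
  induction k with
  | zero => simp
  | succ k ih =>
    have hrec := Ring.succ_nsmul_choose_succ (-(1 / 2) : ℚ) k
    rw [nsmul_eq_mul, ih] at hrec
    have hcb : ((k + 1 : ℕ) : ℚ) * (k + 1).centralBinom = 2 * (2 * k + 1) * k.centralBinom := by
      exact_mod_cast Nat.succ_mul_centralBinom_succ k
    apply mul_left_cancel₀ (by positivity : ((k + 1 : ℕ) : ℚ) ≠ 0)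
    rw [hrec]
    linear_combination -(-(1 / 4) : ℚ) ^ (k + 1) * hcb

theorem Nat.sum_antidiagonal_centralBinom_mul_centralBinom (n : ℕ) :
    ∑ ij ∈ antidiagonal n, ij.1.centralBinom * ij.2.centralBinom = 4 ^ n := by
  have vandermonde := Ring.add_choose_eq (r := (-(1 / 2) : ℚ)) (s := -(1 / 2)) n (Commute.all _ _)
  rw [show (-(1 / 2) : ℚ) + -(1 / 2) = -1 by norm_num, Ring.choose_neg_one] at vandermonde
  have hterm : ∀ ij ∈ antidiagonal n, Ring.choose (-(1 / 2) : ℚ) ij.1 * Ring.choose (-(1 / 2)) ij.2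
      = (-(1 / 4)) ^ n * (ij.1.centralBinom * ij.2.centralBinom : ℕ) := by
    intro ij hij
    rw [Ring.choose_neg_half, Ring.choose_neg_half, ← mem_antidiagonal.mp hij, pow_add]
    push_cast
    ring
  rw [sum_congr rfl hterm, ← mul_sum, ← Nat.cast_sum] at vandermonde
  have h4 : (4 : ℚ) ^ n * (-(1 / 4)) ^ n = (-1) ^ n := by rw [← mul_pow]; norm_num
  apply Nat.cast_injective (R := ℚ)
  apply mul_left_cancel₀ (by positivity : (-(1 / 4) : ℚ) ^ n ≠ 0)
  rw [← vandermonde, Nat.cast_pow, Nat.cast_ofNat, mul_comm, h4]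

theorem Nat.choose_sq_mul_centralBinom {n j : ℕ} (h : j ≤ n) :
    n.choose j ^ 2 * n.centralBinom =
      (2 * n).choose (2 * j) * j.centralBinom * (n - j).centralBinom := by
  qify
  simp only [Nat.centralBinom_eq_two_mul_choose]
  rw [Nat.cast_choose ℚ h, Nat.cast_choose ℚ (by omega : 2 * j ≤ 2 * n),
    Nat.cast_choose ℚ (by omega : n ≤ 2 * n), Nat.cast_choose ℚ (by omega : j ≤ 2 * j),
    Nat.cast_choose ℚ (by omega : n - j ≤ 2 * (n - j)), show 2 * n - n = n by omega,
    show 2 * j - j = j by omega, show 2 * (n - j) - (n - j) = n - j by omega,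
    show 2 * n - 2 * j = 2 * (n - j) by omega]
  field_simp

theorem Nat.four_pow_div_centralBinom (n : ℕ) :
    (4 : ℚ) ^ n / n.centralBinom = ((2 : ℚ) ^ n * n.factorial) ^ 2 / (2 * n).factorial := by
  rw [Nat.centralBinom_eq_two_mul_choose, Nat.cast_choose ℚ (by omega : n ≤ 2 * n),
    show 2 * n - n = n by omega, mul_pow, ← pow_mul, pow_mul']
  field_simp
  norm_num

/-- ∑_{j=0}^n C(n,j)² / C(2n,2j) = (2^n n!)² / (2n)!  in ℚ. -/
theorem sum_choose_sq_div_choose (n : ℕ) :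
    ∑ j ∈ Finset.range (n + 1),
        ((Nat.choose n j : ℚ) ^ 2 / (Nat.choose (2 * n) (2 * j) : ℚ))
      = ((2 : ℚ) ^ n * (Nat.factorial n : ℚ)) ^ 2 / (Nat.factorial (2 * n) : ℚ) := by
  have hterm : ∀ j ∈ range (n + 1), (n.choose j : ℚ) ^ 2 / (2 * n).choose (2 * j)
      = (j.centralBinom * (n - j).centralBinom : ℕ) / n.centralBinom := by
    intro j hj
    have hjn : j ≤ n := Nat.lt_succ_iff.mp (mem_range.mp hj)
    rw [div_eq_div_iff (by exact_mod_cast (Nat.choose_pos (by omega)).ne')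
      (Nat.cast_ne_zero.2 n.centralBinom_ne_zero)]
    exact_mod_cast (Nat.choose_sq_mul_centralBinom hjn).trans (by ring)
  rw [sum_congr rfl hterm, ← sum_div, ← Nat.cast_sum,
    ← Nat.sum_antidiagonal_eq_sum_range_succ (fun i j ↦ i.centralBinom * j.centralBinom),
    Nat.sum_antidiagonal_centralBinom_mul_centralBinom, Nat.cast_pow, Nat.cast_ofNat,
    Nat.four_pow_div_centralBinom]
end

section
/- Let m ≥ 1 and let τ be a permutation of {1, 2, ..., d} for some d ≥ m. Then ∑_{σ ∈ S_m} sgn(σ) · ∏_{i=1}^m binom(τ(i), σ(i)) = (1/(1!·2!···m!)) · (∏_{j=1}^m τ(j)) · ∏_{1 ≤ r < s ≤ m} (τ(s) − τ(r)), where binom(a,b) = 0 when b > a, the sum is over all permutations σ of {1,...,m}, and the identity holds in ℚ. -/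
open Polynomial Finset

/-- Zhu's binomial sum identity: for a permutation `τ` of `{1,…,d}` and `1 ≤ m ≤ d`,
`∑_{σ ∈ S_m} sgn(σ) ∏ C(τ(i), σ(i)) = (∏ τ(j)) · ∏_{r<s}(τ(s)−τ(r)) / (1!2!⋯m!)` in ℚ.
Here `Fin d` is identified with `{1,…,d}` via `i ↦ i+1`. -/
theorem binomial_sum_vandermonde (m d : ℕ) (hm : 1 ≤ m) (hmd : m ≤ d)
    (τ : Equiv.Perm (Fin d)) :
    ∑ σ : Equiv.Perm (Fin m), ((Equiv.Perm.sign σ : ℤ) : ℚ) *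
        ∏ i : Fin m,
          (Nat.choose ((τ (Fin.castLE hmd i) : ℕ) + 1) ((σ i : ℕ) + 1) : ℚ)
      = ((∏ j : Fin m, ((τ (Fin.castLE hmd j) : ℕ) + 1 : ℚ)) *
          ∏ r : Fin m, ∏ s ∈ Finset.Ioi r,
            (((τ (Fin.castLE hmd s) : ℕ) + 1 : ℚ) - ((τ (Fin.castLE hmd r) : ℕ) + 1 : ℚ)))
        / ∏ i : Fin m, (Nat.factorial ((i : ℕ) + 1) : ℚ) := by
  set x : Fin m → ℚ := fun i => ((τ (Fin.castLE hmd i) : ℕ) + 1 : ℚ) with hxdef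
  have hchoose : ∀ (i j : Fin m),
      (Nat.choose ((τ (Fin.castLE hmd i) : ℕ) + 1) ((j : ℕ) + 1) : ℚ)
        = x i * (descPochhammer ℚ (j : ℕ)).eval (x i - 1)
            / (Nat.factorial ((j : ℕ) + 1) : ℚ) := by
    intro i j
    set n : ℕ := (τ (Fin.castLE hmd i) : ℕ) + 1 with hn
    set k : ℕ := (j : ℕ) with hk
    have h1 : (Nat.choose n (k + 1) : ℚ)
        = (Nat.descFactorial n (k + 1) : ℚ) / (Nat.factorial (k + 1) : ℚ) := by
      rw [Nat.choose_eq_descFactorial_div_factorial,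
        Nat.cast_div (Nat.factorial_dvd_descFactorial _ _)
          (by exact_mod_cast (Nat.factorial_pos (k + 1)).ne')]
    have h2 : (Nat.descFactorial n (k + 1) : ℚ)
        = (descPochhammer ℚ (k + 1)).eval (n : ℚ) :=
      (descPochhammer_eval_eq_descFactorial ℚ n (k + 1)).symm
    have h3 : (descPochhammer ℚ (k + 1)).eval (n : ℚ)
        = (n : ℚ) * (descPochhammer ℚ k).eval ((n : ℚ) - 1) := by
      rw [descPochhammer_succ_left]
      simp [eval_comp]
    have hxn : x i = (n : ℚ) := by simp [hxdef, hn]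
    rw [h1, h2, h3, hxn]
  calc
    ∑ σ : Equiv.Perm (Fin m), ((Equiv.Perm.sign σ : ℤ) : ℚ) *
        ∏ i : Fin m,
          (Nat.choose ((τ (Fin.castLE hmd i) : ℕ) + 1) ((σ i : ℕ) + 1) : ℚ)
      = ∑ σ : Equiv.Perm (Fin m), ((Equiv.Perm.sign σ : ℤ) : ℚ) *
          ((∏ i : Fin m, x i) *
            (∏ i : Fin m, (descPochhammer ℚ ((σ i : ℕ))).eval (x i - 1)) /
            ∏ i : Fin m, (Nat.factorial ((i : ℕ) + 1) : ℚ)) := by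
        refine Finset.sum_congr rfl fun σ _ => ?_
        congr 1
        simp only [hchoose]
        rw [Finset.prod_div_distrib, Finset.prod_mul_distrib]
        congr 1
        exact Equiv.prod_comp σ (fun j => (Nat.factorial ((j : ℕ) + 1) : ℚ))
    _ = ((∏ i : Fin m, x i) *
          ∑ σ : Equiv.Perm (Fin m), ((Equiv.Perm.sign σ : ℤ) : ℚ) *
            ∏ i : Fin m, (descPochhammer ℚ ((σ i : ℕ))).eval (x i - 1)) /
          ∏ i : Fin m, (Nat.factorial ((i : ℕ) + 1) : ℚ) := by
        rw [Finset.mul_sum, Finset.sum_div]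
        refine Finset.sum_congr rfl fun σ _ => ?_
        ring
    _ = ((∏ i : Fin m, x i) *
          ∏ r : Fin m, ∏ s ∈ Finset.Ioi r, (x s - x r)) /
          ∏ i : Fin m, (Nat.factorial ((i : ℕ) + 1) : ℚ) := by
        congr 1
        congr 1
        have hdet : ∑ σ : Equiv.Perm (Fin m), ((Equiv.Perm.sign σ : ℤ) : ℚ) *
            ∏ i : Fin m, (descPochhammer ℚ ((σ i : ℕ))).eval (x i - 1)
            = (Matrix.of fun i j : Fin m =>
                (descPochhammer ℚ ((j : ℕ))).eval (x i - 1)).det := by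
          rw [← Matrix.det_transpose, Matrix.det_apply']
          rfl
        rw [hdet, ← Matrix.det_eval_matrixOfPolynomials_eq_det_vandermonde
            (fun i => x i - 1) (fun j => descPochhammer ℚ (j : ℕ))
            (fun j => descPochhammer_natDegree ℚ (j : ℕ))
            (fun j => monic_descPochhammer ℚ (j : ℕ)),
          Matrix.det_vandermonde]
        refine Finset.prod_congr rfl fun r _ => Finset.prod_congr rfl fun s _ => ?_
        ring
end

section
/- The p-adic exponential function exp(πa), where π^{p−1} = −p, is not a meromorphic function on the closed unit disc: there do not exist power series f, g ∈ ℂ_p[[a]] converging on the closed unit disc |a| ≤ 1 with g not identically zero such that exp(πa) = f(a)/g(a) for all |a| < 1. -/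
/-!
By Legendre's formula `‖π ^ n / n!‖ = ‖π‖ ^ s_p(n)`, where `s_p` is the base-`p` digit sum.
If `exp(πa) · g = f` on the open disc, uniqueness of power series expansions makes `f` the Cauchy
product of these coefficients with `g`, and both `f n` and `g n` tend to `0`. Let `m` be the last
index at which `‖g m‖` is maximal. For large `k`, in the coefficient of `a ^ (p ^ k + m)` the term
`π ^ p ^ k / (p ^ k)! · g m`, of norm `‖π‖ ‖g m‖`, strictly dominates all the others
(their digit sums are at least `2`, or their `g`-factor is strictly smaller), so by the ultrametric
inequality `‖f (p ^ k + m)‖ = ‖π‖ ‖g m‖`, which does not tend to `0`.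
-/

open Finset Filter Topology IsUltrametricDist FormalMultilinearSeries

namespace Nat

theorem digits_sum_add_base_pow {b t k : ℕ} (hb : 1 < b) (ht : t < b ^ k) :
    (b.digits (t + b ^ k)).sum = (b.digits t).sum + 1 := by
  have hlen : (b.digits t).length ≤ k := (digits_length_le_iff hb t).mpr ht
  have h := digits_append_zeroes_append_digits (n := t) (k := k - (b.digits t).length) hb one_pos
  rw [Nat.add_sub_cancel' hlen, mul_one, digits_of_lt b 1 one_ne_zero hb] at h
  simp [← h]

theorem digits_sum_pos (b : ℕ) {n : ℕ} (hn : n ≠ 0) : 0 < (b.digits n).sum :=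
  List.sum_pos_iff_exists_pos_nat.mpr ⟨_, List.getLast_mem (digits_ne_nil_iff_ne_zero.mpr hn),
    Nat.pos_of_ne_zero (getLast_digit_ne_zero b hn)⟩

end Nat

theorem IsUltrametricDist.norm_sum_lt_of_forall_lt {M ι : Type*} [SeminormedAddCommGroup M]
    [IsUltrametricDist M] {s : Finset ι} {f : ι → M} {R : ℝ} (hR : 0 < R)
    (h : ∀ i ∈ s, ‖f i‖ < R) : ‖∑ i ∈ s, f i‖ < R := by
  rcases s.eq_empty_or_nonempty with rfl | hs
  · simpa using hR
  · obtain ⟨i, hi, hle⟩ := exists_norm_finsetSum_le_of_nonempty hs f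
    exact hle.trans_lt (h i hi)

section Ultrametric

variable {K : Type*} [NormedField K] [IsUltrametricDist K]

theorem norm_natCast_eq_one_of_not_dvd {p u : ℕ} (hp : p.Prime) (hp1 : ‖(p : K)‖ < 1)
    (hu : ¬ p ∣ u) : ‖(u : K)‖ = 1 := by
  obtain ⟨x, y, hxy⟩ : IsCoprime (p : ℤ) u :=
    Nat.isCoprime_iff_coprime.mpr ((hp.coprime_iff_not_dvd).mpr hu)
  have hK : (x : K) * p + y * u = 1 := by exact_mod_cast congrArg (Int.cast : ℤ → K) hxy
  refine le_antisymm (norm_natCast_le_one K u) (not_lt.mp fun hu1 => ?_)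
  have hlt : ‖(x : K) * p + y * u‖ < 1 := by
    refine (norm_add_le_max _ _).trans_lt (max_lt ?_ ?_) <;> rw [norm_mul]
    · exact mul_lt_one_of_nonneg_of_lt_one_right (norm_intCast_le_one K x) (norm_nonneg _) hp1
    · exact mul_lt_one_of_nonneg_of_lt_one_right (norm_intCast_le_one K y) (norm_nonneg _) hu1
  simp [hK] at hlt

theorem norm_natCast_eq_norm_pow_padicValNat {p m : ℕ} (hp : p.Prime) (hp1 : ‖(p : K)‖ < 1)
    (hm : m ≠ 0) : ‖(m : K)‖ = ‖(p : K)‖ ^ padicValNat p m := by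
  have hsplit : (m : K) = (p : K) ^ m.factorization p * ((m / p ^ m.factorization p : ℕ) : K) := by
    rw [← Nat.cast_pow, ← Nat.cast_mul, Nat.ordProj_mul_ordCompl_eq_self m p]
  rw [hsplit, norm_mul, norm_pow,
    norm_natCast_eq_one_of_not_dvd hp hp1 (Nat.not_dvd_ordCompl hp hm), mul_one,
    Nat.factorization_def m hp]

theorem norm_pow_div_factorial {p : ℕ} (hp : p.Prime) (hp0 : (p : K) ≠ 0) (hp1 : ‖(p : K)‖ < 1)
    {π : K} (hπ : ‖π‖ ^ (p - 1) = ‖(p : K)‖) (n : ℕ) :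
    ‖π ^ n / (n.factorial : K)‖ = ‖π‖ ^ (p.digits n).sum := by
  have := Fact.mk hp
  have hlegendre : n = (p.digits n).sum + (p - 1) * padicValNat p n.factorial := by
    have := sub_one_mul_padicValNat_factorial (p := p) n
    have := Nat.digit_sum_le p n
    omega
  have hfac := norm_natCast_eq_norm_pow_padicValNat (K := K) hp hp1 n.factorial_ne_zero
  have hfac0 : ‖(n.factorial : K)‖ ≠ 0 := hfac ▸ pow_ne_zero _ (norm_ne_zero_iff.mpr hp0)
  rw [norm_div, norm_pow, div_eq_iff hfac0, hfac, ← hπ, ← pow_mul, ← pow_add, ← hlegendre]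

end Ultrametric

section PowerSeries

variable {𝕜 : Type*} [NontriviallyNormedField 𝕜] {d e : ℕ → 𝕜} {C : ℝ}

theorem summable_norm_mul_pow_of_norm_le (hd : ∀ n, ‖d n‖ ≤ C) {a : 𝕜} (ha : ‖a‖ < 1) :
    Summable fun n => ‖d n * a ^ n‖ :=
  .of_nonneg_of_le (fun _ => norm_nonneg _)
    (fun n => by rw [norm_mul, norm_pow]; exact mul_le_mul_of_nonneg_right (hd n) (by positivity))
    ((summable_geometric_of_lt_one (norm_nonneg a) ha).mul_left C)

theorem hasFPowerSeriesAt_ofScalarsSum [CompleteSpace 𝕜] (hd : ∀ n, ‖d n‖ ≤ C) :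
    HasFPowerSeriesAt (ofScalarsSum (E := 𝕜) d) (ofScalars 𝕜 d) 0 := by
  have hradius : 1 ≤ (ofScalars 𝕜 d).radius := by
    simpa using (ofScalars 𝕜 d).le_radius_of_bound C (r := 1) fun n => by simpa using hd n
  exact ((ofScalars 𝕜 d).hasFPowerSeriesOnBall (zero_lt_one.trans_le hradius)).hasFPowerSeriesAt

theorem eq_of_tsum_mul_pow_eq [CompleteSpace 𝕜] {C' : ℝ} (hd : ∀ n, ‖d n‖ ≤ C)
    (he : ∀ n, ‖e n‖ ≤ C')
    (h : ∀ a : 𝕜, ‖a‖ < 1 → ∑' n, d n * a ^ n = ∑' n, e n * a ^ n) : d = e := by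
  have hsum : ofScalarsSum (E := 𝕜) e =ᶠ[𝓝 0] ofScalarsSum d := by
    filter_upwards [Metric.ball_mem_nhds (0 : 𝕜) one_pos] with a ha
    simp only [ofScalars_sum_eq, smul_eq_mul, h a (by simpa using ha)]
  exact ofScalars_series_injective 𝕜 𝕜
    ((hasFPowerSeriesAt_ofScalarsSum hd).eq_formalMultilinearSeries
      ((hasFPowerSeriesAt_ofScalarsSum he).congr hsum))

theorem tsum_mul_pow_mul_tsum_mul_pow [CompleteSpace 𝕜] {C' : ℝ} (hd : ∀ n, ‖d n‖ ≤ C)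
    (he : ∀ n, ‖e n‖ ≤ C') {a : 𝕜} (ha : ‖a‖ < 1) :
    (∑' n, d n * a ^ n) * ∑' n, e n * a ^ n =
      ∑' n, (∑ kl ∈ antidiagonal n, d kl.1 * e kl.2) * a ^ n := by
  rw [tsum_mul_tsum_eq_tsum_sum_antidiagonal_of_summable_norm
    (summable_norm_mul_pow_of_norm_le hd ha) (summable_norm_mul_pow_of_norm_le he ha)]
  refine tsum_congr fun n => ?_
  rw [sum_mul]
  refine sum_congr rfl fun kl hkl => ?_
  rw [← mem_antidiagonal.mp hkl, pow_add]
  ring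

end PowerSeries

theorem exists_last_argmax_norm_of_tendsto_zero {E : Type*} [NormedAddCommGroup E] {g : ℕ → E}
    (hg : Tendsto g atTop (𝓝 0)) (hg0 : g ≠ 0) :
    ∃ m, g m ≠ 0 ∧ (∀ j, ‖g j‖ ≤ ‖g m‖) ∧ ∀ j, m < j → ‖g j‖ < ‖g m‖ := by
  obtain ⟨n0, hn0⟩ := Function.ne_iff.mp hg0
  have hpos : 0 < ‖g n0‖ := norm_pos_iff.mpr hn0
  obtain ⟨N, hN⟩ := eventually_atTop.mp
    ((tendsto_zero_iff_norm_tendsto_zero.mp hg).eventually (gt_mem_nhds hpos))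
  have hn0N : n0 < N := not_le.mp fun h => (hN n0 h).false
  obtain ⟨j0, hj0, hmax⟩ := (range N).exists_max_image (‖g ·‖) ⟨n0, mem_range.mpr hn0N⟩
  have hle : ∀ j, ‖g j‖ ≤ ‖g j0‖ := fun j => (lt_or_ge j N).elim
    (fun hj => hmax j (mem_range.mpr hj))
    (fun hj => (hN j hj).le.trans (hmax n0 (mem_range.mpr hn0N)))
  set m := Nat.findGreatest (fun j => ‖g j‖ = ‖g j0‖) N
  have hm : ‖g m‖ = ‖g j0‖ :=
    Nat.findGreatest_spec (P := fun j => ‖g j‖ = ‖g j0‖) (mem_range.mp hj0).le rfl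
  refine ⟨m, norm_pos_iff.mp (hm ▸ hpos.trans_le (hle n0)), hm ▸ hle, fun j hj => ?_⟩
  rcases le_or_gt j N with hjN | hjN
  · exact hm ▸ (hle j).lt_of_ne (Nat.findGreatest_is_greatest hj hjN)
  · exact hm ▸ (hN j hjN.le).trans_le (hle n0)

section DigitSumCoefficients

variable {K : Type*} [NormedField K] {p : ℕ} {r : ℝ} {c g : ℕ → K}

theorem norm_sum_antidiagonal_mul_le [IsUltrametricDist K] {C C' : ℝ} (hc : ∀ n, ‖c n‖ ≤ C)
    (hg : ∀ n, ‖g n‖ ≤ C') (n : ℕ) : ‖∑ kl ∈ antidiagonal n, c kl.1 * g kl.2‖ ≤ C * C' :=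
  norm_sum_le_of_forall_le_of_nonempty ⟨(0, n), by simp⟩ fun kl _ => by
    rw [norm_mul]
    exact mul_le_mul (hc _) (hg _) (norm_nonneg _) ((norm_nonneg _).trans (hc 0))

theorem norm_mul_lt_of_mem_antidiagonal_base_pow_add (hp : 1 < p) (hr0 : 0 < r) (hr1 : r < 1)
    (hc : ∀ n, ‖c n‖ = r ^ (p.digits n).sum) {m k : ℕ} (hm : g m ≠ 0)
    (hmax : ∀ j, ‖g j‖ ≤ ‖g m‖) (hlast : ∀ j, m < j → ‖g j‖ < ‖g m‖) (hmk : m < p ^ k)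
    (htail : ∀ j, p ^ k ≤ j → ‖g j‖ < r * ‖g m‖) {i j : ℕ} (hij : i + j = p ^ k + m)
    (hne : (i, j) ≠ (p ^ k, m)) : ‖c i * g j‖ < r * ‖g m‖ := by
  rcases lt_trichotomy j m with hj | rfl | hj
  · have hci : ‖c i‖ ≤ r ^ 2 := by
      have hpos := Nat.digits_sum_pos p (n := m - j) (by omega)
      rw [hc, show i = (m - j) + p ^ k by omega, Nat.digits_sum_add_base_pow hp (by omega)]
      exact pow_le_pow_of_le_one hr0.le hr1.le (by omega)
    calc ‖c i * g j‖ ≤ r ^ 2 * ‖g m‖ := by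
          rw [norm_mul]; exact mul_le_mul hci (hmax j) (norm_nonneg _) (by positivity)
      _ < r * ‖g m‖ :=
          mul_lt_mul_of_pos_right (pow_lt_self_of_lt_one₀ hr0 hr1 one_lt_two) (norm_pos_iff.mpr hm)
  · exact absurd (congrArg (·, j) (show i = p ^ k by omega)) hne
  · rcases eq_or_ne i 0 with rfl | hi
    · rw [norm_mul, hc, Nat.digits_zero, List.sum_nil, pow_zero, one_mul]
      exact htail j (by omega)
    · have hci : ‖c i‖ ≤ r := by
        rw [hc]; exact pow_le_of_le_one hr0.le hr1.le (Nat.digits_sum_pos p hi).ne'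
      rw [norm_mul]
      exact mul_lt_mul' hci (hlast j hj) (norm_nonneg _) hr0

theorem norm_sum_antidiagonal_base_pow_add [IsUltrametricDist K] (hp : 1 < p) (hr0 : 0 < r)
    (hr1 : r < 1) (hc : ∀ n, ‖c n‖ = r ^ (p.digits n).sum) {m k : ℕ} (hm : g m ≠ 0)
    (hmax : ∀ j, ‖g j‖ ≤ ‖g m‖) (hlast : ∀ j, m < j → ‖g j‖ < ‖g m‖) (hmk : m < p ^ k)
    (htail : ∀ j, p ^ k ≤ j → ‖g j‖ < r * ‖g m‖) :
    ‖∑ kl ∈ antidiagonal (p ^ k + m), c kl.1 * g kl.2‖ = r * ‖g m‖ := by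
  have hmem : (p ^ k, m) ∈ antidiagonal (p ^ k + m) := mem_antidiagonal.mpr rfl
  have hmain : ‖c (p ^ k) * g m‖ = r * ‖g m‖ := by
    rw [norm_mul, hc, ← zero_add (p ^ k), Nat.digits_sum_add_base_pow hp (by positivity)]
    simp
  have hrest : ‖∑ kl ∈ (antidiagonal (p ^ k + m)).erase (p ^ k, m), c kl.1 * g kl.2‖
      < r * ‖g m‖ :=
    norm_sum_lt_of_forall_lt (mul_pos hr0 (norm_pos_iff.mpr hm)) fun kl hkl =>
      norm_mul_lt_of_mem_antidiagonal_base_pow_add hp hr0 hr1 hc hm hmax hlast hmk htail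
        (mem_antidiagonal.mp (mem_of_mem_erase hkl)) (ne_of_mem_erase hkl)
  rw [← add_sum_erase _ _ hmem, norm_add_eq_max_of_norm_ne_norm (hmain ▸ hrest.ne'), hmain,
    max_eq_left hrest.le]

theorem not_tendsto_sum_antidiagonal_mul_zero [IsUltrametricDist K] (hp : 1 < p) (hr0 : 0 < r)
    (hr1 : r < 1) (hc : ∀ n, ‖c n‖ = r ^ (p.digits n).sum) (hg : Tendsto g atTop (𝓝 0))
    (hg0 : g ≠ 0) :
    ¬ Tendsto (fun n => ∑ kl ∈ antidiagonal n, c kl.1 * g kl.2) atTop (𝓝 0) := by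
  intro hprod
  obtain ⟨m, hm, hmax, hlast⟩ := exists_last_argmax_norm_of_tendsto_zero hg hg0
  have hε : 0 < r * ‖g m‖ := mul_pos hr0 (norm_pos_iff.mpr hm)
  obtain ⟨N, hN⟩ := eventually_atTop.mp
    (((tendsto_zero_iff_norm_tendsto_zero.mp hg).eventually (gt_mem_nhds hε)).and
      ((tendsto_zero_iff_norm_tendsto_zero.mp hprod).eventually (gt_mem_nhds hε)))
  have hk : N + m < p ^ (N + m) := Nat.lt_pow_self hp
  have heq := norm_sum_antidiagonal_base_pow_add (k := N + m) hp hr0 hr1 hc hm hmax hlast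
    (by omega) fun j hj => (hN j (by omega)).1
  exact (hN (p ^ (N + m) + m) (by omega)).2.ne heq

end DigitSumCoefficients

theorem exp_pi_not_meromorphic_on_closed_disc_general (p : ℕ) (hp : p.Prime)
    (K : Type*) [NontriviallyNormedField K] [CompleteSpace K] [IsUltrametricDist K]
    (hnorm : ‖(p : K)‖ = (p : ℝ)⁻¹)
    (π : K) (hπ : π ^ (p - 1) = -(p : K)) :
    ¬ ∃ f g : ℕ → K,
        (∀ a : K, ‖a‖ ≤ 1 → Summable fun n => f n * a ^ n) ∧
        (∀ a : K, ‖a‖ ≤ 1 → Summable fun n => g n * a ^ n) ∧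
        (∃ n, g n ≠ 0) ∧
        (∀ a : K, ‖a‖ < 1 →
          (∑' n : ℕ, π ^ n * a ^ n / (Nat.factorial n : K)) * (∑' n : ℕ, g n * a ^ n)
            = ∑' n : ℕ, f n * a ^ n) := by
  rintro ⟨f, g, hf, hg, hg0, heq⟩
  have hp0 : (p : K) ≠ 0 := norm_ne_zero_iff.mp (by simp [hnorm, hp.ne_zero])
  have hp1 : ‖(p : K)‖ < 1 := hnorm ▸ inv_lt_one_of_one_lt₀ (by exact_mod_cast hp.one_lt)
  have hπp : ‖π‖ ^ (p - 1) = ‖(p : K)‖ := by rw [← norm_pow, hπ, norm_neg]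
  have hp2 : p - 1 ≠ 0 := by have := hp.two_le; omega
  have hπ0 : 0 < ‖π‖ := norm_pos_iff.mpr (ne_zero_pow hp2 (hπ ▸ neg_ne_zero.mpr hp0))
  have hπ1 : ‖π‖ < 1 := (pow_lt_one_iff_of_nonneg (norm_nonneg π) hp2).mp (hπp ▸ hp1)
  set c : ℕ → K := fun n => π ^ n / (n.factorial : K)
  have hc : ∀ n, ‖c n‖ = ‖π‖ ^ (p.digits n).sum := norm_pow_div_factorial hp hp0 hp1 hπp
  have hc1 : ∀ n, ‖c n‖ ≤ 1 := fun n => hc n ▸ pow_le_one₀ hπ0.le hπ1.le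
  have hfs : Summable f := by simpa using hf 1 (by simp)
  have hgs : Summable g := by simpa using hg 1 (by simp)
  obtain ⟨Cf, hCf⟩ := hfs.tendsto_cofinite_zero.norm.bddAbove_range_of_cofinite
  obtain ⟨Cg, hCg⟩ := hgs.tendsto_cofinite_zero.norm.bddAbove_range_of_cofinite
  have hfc : f = fun n => ∑ kl ∈ antidiagonal n, c kl.1 * g kl.2 := by
    refine eq_of_tsum_mul_pow_eq (fun n => hCf ⟨n, rfl⟩)
      (norm_sum_antidiagonal_mul_le hc1 fun n => hCg ⟨n, rfl⟩) fun a ha => ?_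
    rw [← heq a ha, ← tsum_mul_pow_mul_tsum_mul_pow hc1 (fun n => hCg ⟨n, rfl⟩) ha]
    simp only [c, div_mul_eq_mul_div]
  exact not_tendsto_sum_antidiagonal_mul_zero hp.one_lt hπ0 hπ1 hc hgs.tendsto_atTop_zero
    (Function.ne_iff.mpr hg0) (hfc ▸ hfs.tendsto_atTop_zero)

/-- `exp(πa)`, with `π^{p−1} = −p`, is not meromorphic on the closed unit disc:
there are no power series `f, g` converging on `‖a‖ ≤ 1`, `g` not identically
zero, with `exp(πa)·g(a) = f(a)` for all `‖a‖ < 1`. -/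
theorem exp_pi_not_meromorphic_on_closed_disc (p : ℕ) (hp : p.Prime)
    (K : Type*) [NontriviallyNormedField K] [CompleteSpace K] [IsUltrametricDist K]
    [CharZero K] (hnorm : ‖(p : K)‖ = (p : ℝ)⁻¹)
    (π : K) (hπ : π ^ (p - 1) = -(p : K)) :
    ¬ ∃ f g : ℕ → K,
        (∀ a : K, ‖a‖ ≤ 1 → Summable fun n => f n * a ^ n) ∧
        (∀ a : K, ‖a‖ ≤ 1 → Summable fun n => g n * a ^ n) ∧
        (∃ n, g n ≠ 0) ∧
        (∀ a : K, ‖a‖ < 1 →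
          (∑' n : ℕ, π ^ n * a ^ n / (Nat.factorial n : K)) * (∑' n : ℕ, g n * a ^ n)
            = ∑' n : ℕ, f n * a ^ n) :=
  exp_pi_not_meromorphic_on_closed_disc_general p hp K hnorm π hπ
end

section
/- Let d ≥ 1, R a commutative ring in which d is invertible, π ∈ R invertible, and H = π(d·x^d + a·x) ∈ R[[a,x]]. Then H·R[[a,x]] ∩ (⊕_{i=0}^{d−1} R[[a]]·x^i) = {0}; that is, if H·B is a polynomial in x of degree < d for some B ∈ R[[a,x]], then B = 0. -/
/-!
Comparing coefficients of `x^(j+d)` in `H·B`, where the right-hand side vanishes, gives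
`d·B_j = -a·B_(j+d-1)` for the coefficients `B_j ∈ R[[a]]`. As `d` is a unit, `a^i` dividing all
`B_j` forces `a^(i+1)` to divide all of them, so each `B_j` is divisible by every power of `a` and
hence vanishes.
-/

open PowerSeries

namespace PowerSeries

variable {A : Type*} [CommRing A]

theorem eq_zero_of_forall_X_pow_dvd {f : A⟦X⟧} (hf : ∀ n, (X : A⟦X⟧) ^ n ∣ f) : f = 0 := by
  ext k
  rw [map_zero]
  exact X_pow_dvd_iff.mp (hf (k + 1)) k k.lt_succ_self

theorem coeff_sum_C_mul_X_pow_of_le {d n : ℕ} (c : Fin d → A) (hn : d ≤ n) :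
    coeff n (∑ i : Fin d, C (c i) * X ^ (i : ℕ)) = 0 := by
  rw [map_sum]
  refine Finset.sum_eq_zero fun i _ => ?_
  rw [coeff_C_mul, coeff_X_pow, if_neg (by omega), mul_zero]

theorem coeff_add_succ_C_mul_X_pow_add_C_mul_X_mul (u t : A) (B : A⟦X⟧) (j e : ℕ) :
    coeff (j + (e + 1)) ((C u * X ^ (e + 1) + C t * X) * B)
      = u * coeff j B + t * coeff (j + e) B := by
  rw [add_mul, map_add, mul_assoc, mul_assoc, coeff_C_mul, coeff_C_mul, coeff_X_pow_mul,
    ← add_assoc, coeff_succ_X_mul]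

end PowerSeries

theorem pow_dvd_of_unit_mul_add_mul_shift_eq_zero {A : Type*} [CommRing A] {u t : A}
    (hu : IsUnit u) {f : ℕ → A} {e : ℕ} (hf : ∀ j, u * f j + t * f (j + e) = 0) (i j : ℕ) :
    t ^ i ∣ f j := by
  induction i generalizing j with
  | zero => rw [pow_zero]; exact one_dvd _
  | succ i ih =>
    rw [← hu.dvd_mul_left, eq_neg_of_add_eq_zero_left (hf j), dvd_neg, pow_succ']
    exact mul_dvd_mul_left t (ih (j + e))

/-- If `H·B` is a polynomial in `x` of degree `< d`, where
`H = π(d x^d + a x) ∈ R[[a]][[x]]` with `d` and `π` invertible, then `B = 0`. -/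
theorem H_mul_eq_poly_imp_zero (d : ℕ) (hd : 1 ≤ d)
    (R : Type*) [CommRing R] (hdu : IsUnit (d : R)) (π : R) (hπ : IsUnit π)
    (B : PowerSeries (PowerSeries R)) (c : Fin d → PowerSeries R)
    (h : PowerSeries.C (R := PowerSeries R) (PowerSeries.C (R := R) π)
          * ((d : PowerSeries (PowerSeries R)) * PowerSeries.X ^ d
             + PowerSeries.C (R := PowerSeries R) PowerSeries.X * PowerSeries.X) * B
        = ∑ i : Fin d, PowerSeries.C (R := PowerSeries R) (c i) * PowerSeries.X ^ (i : ℕ)) :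
    B = 0 := by
  obtain ⟨e, rfl⟩ := Nat.exists_eq_add_of_le' hd
  have hrec : ∀ j, ((e + 1 : ℕ) : R⟦X⟧) * coeff j B + X * coeff (j + e) B = 0 := by
    intro j
    have hj := congrArg (coeff (j + (e + 1))) h
    rw [coeff_sum_C_mul_X_pow_of_le c (Nat.le_add_left _ _), mul_assoc, coeff_C_mul,
      ← map_natCast (C (R := R⟦X⟧)), coeff_add_succ_C_mul_X_pow_add_C_mul_X_mul] at hj
    exact ((hπ.map C).mul_right_eq_zero).mp hj
  have hdX : IsUnit ((e + 1 : ℕ) : R⟦X⟧) := by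
    rw [← map_natCast (C (R := R))]
    exact hdu.map C
  ext j : 1
  rw [map_zero]
  exact eq_zero_of_forall_X_pow_dvd
    fun n => pow_dvd_of_unit_mul_add_mul_shift_eq_zero hdX hrec n j
end
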